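/- arXiv:0906.1883 — 3 statements merged into one kernel-verified Lean document; each statement's English description precedes it below -/
import Mathlib

section
/- Let (S,Σ) be a measurable space, μ a probability measure on (S,Σ), and X a Banach space. If F: Σ → X is a countably additive vector measure of bounded γ-variation with respect to μ, then for every finite collection of disjoint sets A_1,…,A_N ∈ Σ with μ(A_n) > 0 for all n and all scalars c_1,…,c_N one has ‖Σ_{n=1}^N c_n F(A_n)‖ ≤ (Σ_{n=1}^N |c_n|² μ(A_n))^{1/2} · ‖F‖_{V_γ(μ;X)}. In particular, F is of bounded 2-semivariation with respect to μ. -/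
open MeasureTheory ProbabilityTheory Function
open scoped ENNReal NNReal

noncomputable section

/-- `γ` is a sequence of independent standard Gaussian random variables on `(Ω, P)`. -/
def IsStdGaussianSeq {Ω : Type*} [MeasurableSpace Ω] (P : Measure Ω) (γ : ℕ → Ω → ℝ) : Prop :=
  (∀ n, Measurable (γ n)) ∧ ProbabilityTheory.iIndepFun γ P ∧
    ∀ n, Measure.map (γ n) P = ProbabilityTheory.gaussianReal 0 1

/-- The set of quantities `(𝔼 ‖∑ γ_n F(A_n)/√(μ(A_n))‖²)^{1/2}`, taken over all finite
collections of disjoint measurable sets of positive measure; its supremum is the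
`γ`-variation of `F` with respect to `μ`. -/
def gammaVarSet {S : Type*} [MeasurableSpace S] {X : Type*} [NormedAddCommGroup X]
    [NormedSpace ℝ X] {Ω : Type*} [MeasurableSpace Ω] (P : Measure Ω) (γ : ℕ → Ω → ℝ)
    (μ : Measure S) (F : Set S → X) : Set ℝ :=
  { v | ∃ (N : ℕ) (A : Fin N → Set S), (∀ n, MeasurableSet (A n)) ∧
      Pairwise (Disjoint on A) ∧ (∀ n, 0 < μ (A n)) ∧
      v = Real.sqrt (∫ ω, ‖∑ n : Fin N,
            (γ n ω / Real.sqrt ((μ (A n)).toReal)) • F (A n)‖ ^ 2 ∂P) }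

/-- `F` has bounded `γ`-variation with respect to `μ`. -/
def HasBoundedGammaVariation {S : Type*} [MeasurableSpace S] {X : Type*} [NormedAddCommGroup X]
    [NormedSpace ℝ X] {Ω : Type*} [MeasurableSpace Ω] (P : Measure Ω) (γ : ℕ → Ω → ℝ)
    (μ : Measure S) (F : Set S → X) : Prop :=
  BddAbove (gammaVarSet P γ μ F)

/-- The `γ`-variation norm `‖F‖_{V_γ(μ;X)}`. -/
def gammaVar {S : Type*} [MeasurableSpace S] {X : Type*} [NormedAddCommGroup X]
    [NormedSpace ℝ X] {Ω : Type*} [MeasurableSpace Ω] (P : Measure Ω) (γ : ℕ → Ω → ℝ)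
    (μ : Measure S) (F : Set S → X) : ℝ :=
  sSup (gammaVarSet P γ μ F)

end

/-! Let `φ` be a norming functional for `y = ∑ cₙ F(Aₙ)` and `mₙ = μ(Aₙ)`. By Cauchy–Schwarz,
`‖y‖ = ∑ (cₙ √mₙ) (φ F(Aₙ) / √mₙ) ≤ (∑ |cₙ|² mₙ)^{1/2} (∑ (φ F(Aₙ) / √mₙ)²)^{1/2}`.
Since the `γₙ` are orthonormal in `L²(P)`, the last sum is `𝔼 |φ G|² ≤ 𝔼 ‖G‖²` for the Gaussian
sum `G = ∑ γₙ F(Aₙ) / √mₙ`, and `𝔼 ‖G‖² ≤ ‖F‖²_{V_γ(μ;X)}`. -/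

namespace IsStdGaussianSeq

variable {Ω : Type*} [MeasurableSpace Ω] {P : Measure Ω} {γ : ℕ → Ω → ℝ}

lemma hasLaw (hγ : IsStdGaussianSeq P γ) (n : ℕ) : HasLaw (γ n) (gaussianReal 0 1) P :=
  ⟨(hγ.1 n).aemeasurable, hγ.2.2 n⟩

lemma isProbabilityMeasure (hγ : IsStdGaussianSeq P γ) : IsProbabilityMeasure P :=
  (hγ.hasLaw 0).isProbabilityMeasure

lemma memLp_two (hγ : IsStdGaussianSeq P γ) (n : ℕ) : MemLp (γ n) 2 P :=
  (hγ.hasLaw n).hasGaussianLaw.memLp_two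

lemma integral_eq_zero (hγ : IsStdGaussianSeq P γ) (n : ℕ) : ∫ ω, γ n ω ∂P = 0 := by
  rw [(hγ.hasLaw n).integral_eq, integral_id_gaussianReal]

lemma variance_eq_one (hγ : IsStdGaussianSeq P γ) (n : ℕ) : Var[γ n; P] = 1 := by
  rw [(hγ.hasLaw n).variance_eq, variance_id_gaussianReal, NNReal.coe_one]

theorem integral_sum_mul_sq (hγ : IsStdGaussianSeq P γ) {ι : Type*} [Fintype ι] {e : ι → ℕ}
    (he : Injective e) (b : ι → ℝ) :
    ∫ ω, (∑ i, b i * γ (e i) ω) ^ 2 ∂P = ∑ i, b i ^ 2 := by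
  have := hγ.isProbabilityMeasure
  set Y : ι → Ω → ℝ := fun i ω => b i * γ (e i) ω
  have hY : ∀ i ∈ Finset.univ, MemLp (Y i) 2 P := fun i _ => (hγ.memLp_two (e i)).const_mul _
  have hindep : Set.Pairwise ↑(Finset.univ : Finset ι) fun i j => Y i ⟂ᵢ[P] Y j :=
    fun i _ j _ hij => (hγ.2.1.indepFun (he.ne hij)).comp
      (measurable_const_mul (b i)) (measurable_const_mul (b j))
  have hsum : (∑ i, Y i) = fun ω => ∑ i, b i * γ (e i) ω := by ext ω; simp [Y]
  have hmean : ∫ ω, ∑ i, b i * γ (e i) ω ∂P = 0 := by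
    rw [integral_finsetSum _ fun i _ => (hY i (Finset.mem_univ i)).integrable one_le_two]
    simp only [Y, integral_const_mul, hγ.integral_eq_zero, mul_zero, Finset.sum_const_zero]
  calc ∫ ω, (∑ i, b i * γ (e i) ω) ^ 2 ∂P = Var[∑ i, Y i; P] := by
        rw [hsum, variance_of_integral_eq_zero _ hmean]
        exact (memLp_finsetSum _ hY).aestronglyMeasurable.aemeasurable
    _ = ∑ i, Var[Y i; P] := IndepFun.variance_sum hY hindep
    _ = ∑ i, b i ^ 2 := by simp [Y, variance_const_mul, hγ.variance_eq_one]

end IsStdGaussianSeq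

section NormingFunctional

variable {Ω E : Type*} [MeasurableSpace Ω] {P : Measure Ω} [NormedAddCommGroup E]
  [NormedSpace ℝ E]

lemma MeasureTheory.MemLp.smul_const {p : ℝ≥0∞} {f : Ω → ℝ} (hf : MemLp f p P) (x : E) :
    MemLp (fun ω => f ω • x) p P :=
  ((ContinuousLinearMap.id ℝ ℝ).smulRight x).comp_memLp' hf

lemma integral_sq_apply_le_integral_norm_sq {G : Ω → E} (hG : MemLp G 2 P) {φ : StrongDual ℝ E}
    (hφ : ‖φ‖ ≤ 1) : ∫ ω, φ (G ω) ^ 2 ∂P ≤ ∫ ω, ‖G ω‖ ^ 2 ∂P := by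
  refine integral_mono_of_nonneg (ae_of_all _ fun ω => sq_nonneg _)
    (hG.integrable_norm_pow two_ne_zero) (ae_of_all _ fun ω => ?_)
  calc φ (G ω) ^ 2 = ‖φ (G ω)‖ ^ 2 := (sq_abs _).symm
    _ ≤ ‖G ω‖ ^ 2 := by
      gcongr
      exact φ.le_of_opNorm_le hφ _ |>.trans_eq (one_mul _)

end NormingFunctional

section GammaVariation

variable {S X Ω : Type*} [MeasurableSpace S] [NormedAddCommGroup X] [NormedSpace ℝ X]
  [MeasurableSpace Ω] {P : Measure Ω} {γ : ℕ → Ω → ℝ} {μ : Measure S} {F : Set S → X}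
  {N : ℕ} {A : Fin N → Set S}

lemma zero_mem_gammaVarSet : 0 ∈ gammaVarSet P γ μ F :=
  ⟨0, Fin.elim0, fun n => n.elim0, fun n => n.elim0, fun n => n.elim0, by simp⟩

lemma gammaVar_nonneg (hF : HasBoundedGammaVariation P γ μ F) : 0 ≤ gammaVar P γ μ F :=
  le_csSup hF zero_mem_gammaVarSet

lemma integral_norm_sum_sq_le_gammaVar_sq (hF : HasBoundedGammaVariation P γ μ F)
    (hA : ∀ n, MeasurableSet (A n)) (hdisj : Pairwise (Disjoint on A)) (hpos : ∀ n, 0 < μ (A n)) :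
    ∫ ω, ‖∑ n : Fin N, (γ n ω / √(μ (A n)).toReal) • F (A n)‖ ^ 2 ∂P ≤ gammaVar P γ μ F ^ 2 :=
  (Real.sqrt_le_left (gammaVar_nonneg hF)).1 (le_csSup hF ⟨N, A, hA, hdisj, hpos, rfl⟩)

lemma sum_sq_apply_div_sqrt_le_gammaVar_sq (hγ : IsStdGaussianSeq P γ)
    (hF : HasBoundedGammaVariation P γ μ F) (hA : ∀ n, MeasurableSet (A n))
    (hdisj : Pairwise (Disjoint on A)) (hpos : ∀ n, 0 < μ (A n)) {φ : StrongDual ℝ X}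
    (hφ : ‖φ‖ ≤ 1) :
    ∑ n, (φ (F (A n)) / √(μ (A n)).toReal) ^ 2 ≤ gammaVar P γ μ F ^ 2 := by
  set G : Ω → X := fun ω => ∑ n : Fin N, (γ n ω / √(μ (A n)).toReal) • F (A n)
  have hG : MemLp G 2 P :=
    memLp_finsetSum _ fun n _ => ((hγ.memLp_two n).mul_const _).smul_const _
  calc ∑ n, (φ (F (A n)) / √(μ (A n)).toReal) ^ 2
      = ∫ ω, (∑ n, φ (F (A n)) / √(μ (A n)).toReal * γ n ω) ^ 2 ∂P :=
        (hγ.integral_sum_mul_sq Fin.val_injective _).symm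
    _ = ∫ ω, φ (G ω) ^ 2 ∂P := by
        congr with ω
        simp only [G, map_sum, map_smul, smul_eq_mul]
        exact congrArg (· ^ 2) (Finset.sum_congr rfl fun n _ => by ring)
    _ ≤ ∫ ω, ‖G ω‖ ^ 2 ∂P := integral_sq_apply_le_integral_norm_sq hG hφ
    _ ≤ gammaVar P γ μ F ^ 2 := integral_norm_sum_sq_le_gammaVar_sq hF hA hdisj hpos

theorem norm_sum_smul_le_sqrt_mul_gammaVar [IsFiniteMeasure μ] (hγ : IsStdGaussianSeq P γ)
    (hF : HasBoundedGammaVariation P γ μ F) (hA : ∀ n, MeasurableSet (A n))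
    (hdisj : Pairwise (Disjoint on A)) (hpos : ∀ n, 0 < μ (A n)) (c : Fin N → ℝ) :
    ‖∑ n, c n • F (A n)‖ ≤ √(∑ n, |c n| ^ 2 * (μ (A n)).toReal) * gammaVar P γ μ F := by
  obtain ⟨φ, hφ, hφy⟩ := exists_dual_vector'' ℝ (∑ n, c n • F (A n))
  have hm : ∀ n, 0 < (μ (A n)).toReal :=
    fun n => ENNReal.toReal_pos (hpos n).ne' (measure_ne_top μ _)
  calc ‖∑ n, c n • F (A n)‖
      = ∑ n, c n * √(μ (A n)).toReal * (φ (F (A n)) / √(μ (A n)).toReal) := by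
        rw [← show φ _ = ‖_‖ from hφy, map_sum]
        refine Finset.sum_congr rfl fun n _ => ?_
        rw [map_smul, smul_eq_mul]
        field_simp [(Real.sqrt_pos.2 (hm n)).ne']
    _ ≤ √(∑ n, (c n * √(μ (A n)).toReal) ^ 2) *
          √(∑ n, (φ (F (A n)) / √(μ (A n)).toReal) ^ 2) :=
        Real.sum_mul_le_sqrt_mul_sqrt _ _ _
    _ = √(∑ n, |c n| ^ 2 * (μ (A n)).toReal) *
          √(∑ n, (φ (F (A n)) / √(μ (A n)).toReal) ^ 2) := by
        simp only [mul_pow, sq_abs, Real.sq_sqrt (hm _).le]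
    _ ≤ √(∑ n, |c n| ^ 2 * (μ (A n)).toReal) * gammaVar P γ μ F := by
        gcongr
        exact Real.sqrt_le_iff.2 ⟨gammaVar_nonneg hF,
          sum_sq_apply_div_sqrt_le_gammaVar_sq hγ hF hA hdisj hpos hφ⟩

end GammaVariation

theorem norm_sum_le_of_boundedGammaVariation_general
    {S : Type*} [MeasurableSpace S] {X : Type*} [NormedAddCommGroup X] [NormedSpace ℝ X]
    {Ω : Type*} [MeasurableSpace Ω] (P : Measure Ω)
    (γ : ℕ → Ω → ℝ) (hγ : IsStdGaussianSeq P γ)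
    (μ : Measure S) [IsProbabilityMeasure μ]
    (F : VectorMeasure S X) (hF : HasBoundedGammaVariation P γ μ ⇑F) :
    (∀ (N : ℕ) (A : Fin N → Set S), (∀ n, MeasurableSet (A n)) →
      Pairwise (Disjoint on A) → (∀ n, 0 < μ (A n)) → ∀ c : Fin N → ℝ,
      ‖∑ n : Fin N, c n • F (A n)‖ ≤
        Real.sqrt (∑ n : Fin N, |c n| ^ 2 * (μ (A n)).toReal) * gammaVar P γ μ ⇑F) ∧
    ∃ C : ℝ, 0 ≤ C ∧ ∀ (N : ℕ) (A : Fin N → Set S), (∀ n, MeasurableSet (A n)) →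
      Pairwise (Disjoint on A) → (∀ n, 0 < μ (A n)) → ∀ c : Fin N → ℝ,
      ‖∑ n : Fin N, c n • F (A n)‖ ≤
        C * Real.sqrt (∑ n : Fin N, |c n| ^ 2 * (μ (A n)).toReal) := by
  refine ⟨fun N A hA hdisj hpos c => norm_sum_smul_le_sqrt_mul_gammaVar hγ hF hA hdisj hpos c,
    gammaVar P γ μ F, gammaVar_nonneg hF, fun N A hA hdisj hpos c => ?_⟩
  rw [mul_comm]
  exact norm_sum_smul_le_sqrt_mul_gammaVar hγ hF hA hdisj hpos c

/-- If `F : Σ → X` is a countably additive vector measure of bounded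
`γ`-variation with respect to `μ`, then for all disjoint measurable `A_1, …, A_N` of positive
measure and all scalars `c_1, …, c_N`,
`‖∑ c_n F(A_n)‖ ≤ (∑ |c_n|² μ(A_n))^{1/2} ‖F‖_{V_γ(μ;X)}`.
In particular, `F` is of bounded 2-semivariation with respect to `μ`. -/
theorem norm_sum_le_of_boundedGammaVariation
    {S : Type*} [MeasurableSpace S] {X : Type*} [NormedAddCommGroup X] [NormedSpace ℝ X]
    [CompleteSpace X]
    {Ω : Type*} [MeasurableSpace Ω] (P : Measure Ω) [IsProbabilityMeasure P]
    (γ : ℕ → Ω → ℝ) (hγ : IsStdGaussianSeq P γ)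
    (μ : Measure S) [IsProbabilityMeasure μ]
    (F : VectorMeasure S X) (hF : HasBoundedGammaVariation P γ μ ⇑F) :
    (∀ (N : ℕ) (A : Fin N → Set S), (∀ n, MeasurableSet (A n)) →
      Pairwise (Disjoint on A) → (∀ n, 0 < μ (A n)) → ∀ c : Fin N → ℝ,
      ‖∑ n : Fin N, c n • F (A n)‖ ≤
        Real.sqrt (∑ n : Fin N, |c n| ^ 2 * (μ (A n)).toReal) * gammaVar P γ μ ⇑F) ∧
    ∃ C : ℝ, 0 ≤ C ∧ ∀ (N : ℕ) (A : Fin N → Set S), (∀ n, MeasurableSet (A n)) →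
      Pairwise (Disjoint on A) → (∀ n, 0 < μ (A n)) → ∀ c : Fin N → ℝ,
      ‖∑ n : Fin N, c n • F (A n)‖ ≤
        C * Real.sqrt (∑ n : Fin N, |c n| ^ 2 * (μ (A n)).toReal) :=
  norm_sum_le_of_boundedGammaVariation_general P γ hγ μ F hF
end

section
/- Let (S,Σ) be a measurable space and X a Banach space. The set V^r(μ;X) of all countably additive vector measures F: Σ → X of bounded randomised variation is a vector space under setwise operations, ‖·‖_{V^r(μ;X)} is a norm on it, and V^r(μ;X) is complete with respect to this norm, i.e. it is a Banach space. -/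
open MeasureTheory ProbabilityTheory Function
open scoped ENNReal NNReal

noncomputable section

/-- `r` is a Rademacher sequence on `(Ω, P)`: independent random variables taking the values
`1` and `-1` each with probability `1/2`. -/
def IsRademacherSeq {Ω : Type*} [MeasurableSpace Ω] (P : Measure Ω) (r : ℕ → Ω → ℝ) : Prop :=
  (∀ n, Measurable (r n)) ∧ ProbabilityTheory.iIndepFun r P ∧
    ∀ n, Measure.map (r n) P =
      (1 / 2 : ENNReal) • Measure.dirac (1 : ℝ) + (1 / 2 : ENNReal) • Measure.dirac (-1 : ℝ)

/-- The set of quantities `(𝔼 ‖∑ r_n F(A_n)‖²)^{1/2}`, taken over all finite collections of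
disjoint measurable sets; its supremum is the randomised variation of `F`. -/
def randVarSet {S : Type*} [MeasurableSpace S] {X : Type*} [NormedAddCommGroup X]
    [NormedSpace ℝ X] {Ω : Type*} [MeasurableSpace Ω] (P : Measure Ω) (r : ℕ → Ω → ℝ)
    (F : Set S → X) : Set ℝ :=
  { v | ∃ (N : ℕ) (A : Fin N → Set S), (∀ n, MeasurableSet (A n)) ∧
      Pairwise (Disjoint on A) ∧
      v = Real.sqrt (∫ ω, ‖∑ n : Fin N, r n ω • F (A n)‖ ^ 2 ∂P) }

/-- `F` is of bounded randomised variation. -/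
def HasBoundedRandVariation {S : Type*} [MeasurableSpace S] {X : Type*} [NormedAddCommGroup X]
    [NormedSpace ℝ X] {Ω : Type*} [MeasurableSpace Ω] (P : Measure Ω) (r : ℕ → Ω → ℝ)
    (F : Set S → X) : Prop :=
  BddAbove (randVarSet P r F)

/-- The randomised variation norm `‖F‖_{V^r}`. -/
def randVar {S : Type*} [MeasurableSpace S] {X : Type*} [NormedAddCommGroup X]
    [NormedSpace ℝ X] {Ω : Type*} [MeasurableSpace Ω] (P : Measure Ω) (r : ℕ → Ω → ℝ)
    (F : Set S → X) : ℝ :=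
  sSup (randVarSet P r F)

end

/-!
For a finite family `v`, `‖v‖_r := (𝔼 ‖∑ rₙ vₙ‖²)^{1/2}` is the `L²(P; X)`-norm of a Rademacher
sum. It is therefore subadditive and absolutely homogeneous in `v`, and since `|rₙ| = 1` it equals
`‖x‖` on a single vector and is at most `∑ ‖vₙ‖`, hence continuous in `v`. Taking the supremum
over disjoint families, `‖·‖_{V^r}` inherits the seminorm properties and dominates
`sup_A ‖F A‖`, which makes it definite on vector measures.

A `V^r`-Cauchy sequence `Fₙ` is then uniformly Cauchy on sets, so it converges uniformly to
some `G`, which is σ-additive by exchanging the limits in `n` and over the partial unions.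
For a fixed disjoint family, continuity gives `‖(Fₙ - G)(A)‖_r = limₘ ‖(Fₙ - Fₘ)(A)‖_r`, so
`‖Fₙ - G‖_{V^r} ≤ ε` as soon as `‖Fₙ - Fₘ‖_{V^r} < ε` for all large `m`.
-/

open Filter Topology
open scoped Pointwise

section RademacherNorm

variable {Ω : Type*} [MeasurableSpace Ω] {P : Measure Ω} {r : ℕ → Ω → ℝ}
  {X : Type*} [NormedAddCommGroup X] [NormedSpace ℝ X] {N : ℕ}

theorem IsRademacherSeq.abs_eq_one_ae (hr : IsRademacherSeq P r) (n : ℕ) :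
    ∀ᵐ ω ∂P, |r n ω| = 1 := by
  have hpm : MeasurableSet ({1, -1} : Set ℝ) := (measurableSet_singleton (-1)).insert 1
  have hnull : P (r n ⁻¹' {1, -1}ᶜ) = 0 := by
    rw [← Measure.map_apply (hr.1 n) hpm.compl, hr.2.2 n]
    simp [Measure.dirac_apply' _ hpm.compl]
  filter_upwards [measure_eq_zero_iff_ae_notMem.1 hnull] with ω hω
  simp only [Set.mem_preimage, Set.mem_compl_iff, not_not, Set.mem_insert_iff,
    Set.mem_singleton_iff] at hω
  rcases hω with h | h <;> simp [h]

variable (P r) in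
noncomputable def rademacherNorm (v : Fin N → X) : ℝ :=
  Real.sqrt (∫ ω, ‖∑ n : Fin N, r n ω • v n‖ ^ 2 ∂P)

@[simp]
theorem rademacherNorm_zero : rademacherNorm P r (0 : Fin N → X) = 0 := by
  simp [rademacherNorm]

theorem rademacherNorm_smul (c : ℝ) (v : Fin N → X) :
    rademacherNorm P r (c • v) = |c| * rademacherNorm P r v := by
  have hsum (ω : Ω) : ‖∑ n : Fin N, r n ω • (c • v) n‖ ^ 2 =
      |c| ^ 2 * ‖∑ n : Fin N, r n ω • v n‖ ^ 2 := by
    simp only [Pi.smul_apply, smul_comm (r _ ω) c, ← Finset.smul_sum, norm_smul,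
      Real.norm_eq_abs, mul_pow]
  simp only [rademacherNorm, hsum, integral_const_mul, Real.sqrt_mul (sq_nonneg _),
    Real.sqrt_sq (abs_nonneg c)]

theorem memLp_rademacherSum [IsFiniteMeasure P] (hm : ∀ n, Measurable (r n))
    (h1 : ∀ n, ∀ᵐ ω ∂P, |r n ω| = 1) (v : Fin N → X) :
    MemLp (fun ω => ∑ n : Fin N, r n ω • v n) 2 P :=
  memLp_finsetSum _ fun (n : Fin N) _ =>
    MemLp.of_bound ((hm n).aestronglyMeasurable.smul_const (v n)) ‖v n‖ <| by
      filter_upwards [h1 n] with ω hω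
      rw [norm_smul, Real.norm_eq_abs, hω, one_mul]

theorem rademacherNorm_eq_toReal_eLpNorm [IsFiniteMeasure P] (hm : ∀ n, Measurable (r n))
    (h1 : ∀ n, ∀ᵐ ω ∂P, |r n ω| = 1) (v : Fin N → X) :
    rademacherNorm P r v = (eLpNorm (fun ω => ∑ n : Fin N, r n ω • v n) 2 P).toReal := by
  rw [(memLp_rademacherSum hm h1 v).eLpNorm_eq_integral_rpow_norm two_ne_zero
    ENNReal.ofNat_ne_top, ENNReal.toReal_ofReal (by positivity), rademacherNorm, Real.sqrt_eq_rpow]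
  norm_num

theorem rademacherNorm_add_le [IsFiniteMeasure P] (hm : ∀ n, Measurable (r n))
    (h1 : ∀ n, ∀ᵐ ω ∂P, |r n ω| = 1) (v w : Fin N → X) :
    rademacherNorm P r (v + w) ≤ rademacherNorm P r v + rademacherNorm P r w := by
  have hv := memLp_rademacherSum hm h1 v
  have hw := memLp_rademacherSum hm h1 w
  simp only [rademacherNorm_eq_toReal_eLpNorm hm h1, Pi.add_apply, smul_add,
    Finset.sum_add_distrib]
  rw [← ENNReal.toReal_add hv.2.ne hw.2.ne]
  exact ENNReal.toReal_mono (ENNReal.add_ne_top.2 ⟨hv.2.ne, hw.2.ne⟩)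
    (eLpNorm_add_le hv.1 hw.1 one_le_two)

theorem rademacherNorm_const [IsProbabilityMeasure P] (h1 : ∀ n, ∀ᵐ ω ∂P, |r n ω| = 1)
    (x : X) : rademacherNorm P r (fun _ : Fin 1 => x) = ‖x‖ := by
  have hsq : (fun ω => ‖∑ n : Fin 1, r n ω • x‖ ^ 2) =ᵐ[P] fun _ => ‖x‖ ^ 2 := by
    filter_upwards [h1 0] with ω hω
    simp [norm_smul, hω]
  rw [rademacherNorm, integral_congr_ae hsq]
  simp

theorem rademacherNorm_le_sum_norm [IsProbabilityMeasure P] (hm : ∀ n, Measurable (r n))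
    (h1 : ∀ n, ∀ᵐ ω ∂P, |r n ω| = 1) (v : Fin N → X) :
    rademacherNorm P r v ≤ ∑ n, ‖v n‖ := by
  have hterm (n : Fin N) : eLpNorm (fun ω => r n ω • v n) 2 P = ‖v n‖ₑ := by
    rw [eLpNorm_congr_norm_ae (g := fun _ => v n), eLpNorm_const _ two_ne_zero
      (IsProbabilityMeasure.ne_zero P)]
    · simp
    · filter_upwards [h1 n] with ω hω
      rw [norm_smul, Real.norm_eq_abs, hω, one_mul]
  have hle : eLpNorm (fun ω => ∑ n : Fin N, r n ω • v n) 2 P ≤ ∑ n, ‖v n‖ₑ := by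
    simpa only [← Finset.sum_fn, hterm] using eLpNorm_sum_le (μ := P) (s := Finset.univ)
      (fun (n : Fin N) _ => (hm n).aestronglyMeasurable.smul_const (v n)) one_le_two
  rw [rademacherNorm_eq_toReal_eLpNorm hm h1]
  calc _ ≤ (∑ n, ‖v n‖ₑ).toReal := ENNReal.toReal_mono (by simp [enorm_ne_top]) hle
    _ = ∑ n, ‖v n‖ := by simp [ENNReal.toReal_sum]

theorem continuous_rademacherNorm [IsProbabilityMeasure P] (hm : ∀ n, Measurable (r n))
    (h1 : ∀ n, ∀ᵐ ω ∂P, |r n ω| = 1) : Continuous (rademacherNorm P r : (Fin N → X) → ℝ) := by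
  refine (LipschitzWith.of_le_add_mul (N : ℝ≥0) fun v w => ?_).continuous
  calc rademacherNorm P r v = rademacherNorm P r (v - w + w) := by rw [sub_add_cancel]
    _ ≤ rademacherNorm P r w + ∑ n, ‖(v - w) n‖ := by
      linarith [rademacherNorm_add_le hm h1 (v - w) w, rademacherNorm_le_sum_norm hm h1 (v - w)]
    _ ≤ rademacherNorm P r w + ∑ _n : Fin N, dist v w := by
      gcongr with n; exact norm_le_pi_norm (v - w) n |>.trans (dist_eq_norm v w).ge
    _ = rademacherNorm P r w + N * dist v w := by simp

end RademacherNorm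

section RandVar

variable {S : Type*} [MeasurableSpace S] {Ω : Type*} [MeasurableSpace Ω] {P : Measure Ω}
  {r : ℕ → Ω → ℝ} {X : Type*} [NormedAddCommGroup X] [NormedSpace ℝ X] {F G : Set S → X}

theorem mem_randVarSet {v : ℝ} :
    v ∈ randVarSet P r F ↔ ∃ (N : ℕ) (A : Fin N → Set S), (∀ n, MeasurableSet (A n)) ∧
      Pairwise (Disjoint on A) ∧ v = rademacherNorm P r (fun n => F (A n)) :=
  Iff.rfl

theorem zero_mem_randVarSet : 0 ∈ randVarSet P r F :=
  ⟨0, Fin.elim0, fun i => i.elim0, fun i => i.elim0, by simp⟩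

theorem randVar_nonneg : 0 ≤ randVar P r F :=
  Real.sSup_nonneg fun _ ⟨_, _, _, _, hv⟩ => hv ▸ Real.sqrt_nonneg _

theorem randVar_le {C : ℝ} (h : C ∈ upperBounds (randVarSet P r F)) : randVar P r F ≤ C :=
  csSup_le ⟨0, zero_mem_randVarSet⟩ h

theorem rademacherNorm_le_randVar (hF : HasBoundedRandVariation P r F) {N : ℕ}
    {A : Fin N → Set S} (hA : ∀ n, MeasurableSet (A n)) (hd : Pairwise (Disjoint on A)) :
    rademacherNorm P r (fun n => F (A n)) ≤ randVar P r F :=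
  le_csSup hF ⟨N, A, hA, hd, rfl⟩

theorem randVarSet_zero : randVarSet P r (0 : Set S → X) = {0} :=
  Set.eq_singleton_iff_unique_mem.2
    ⟨zero_mem_randVarSet, fun _ ⟨_, _, _, _, hv⟩ => hv.trans rademacherNorm_zero⟩

theorem hasBoundedRandVariation_zero : HasBoundedRandVariation P r (0 : Set S → X) := by
  rw [HasBoundedRandVariation, randVarSet_zero]
  exact bddAbove_singleton

theorem randVar_zero : randVar P r (0 : Set S → X) = 0 := by
  rw [randVar, randVarSet_zero, csSup_singleton]

theorem randVarSet_smul (c : ℝ) (F : Set S → X) :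
    randVarSet P r (c • F) = |c| • randVarSet P r F := by
  ext v
  simp only [Set.mem_smul_set, mem_randVarSet, smul_eq_mul]
  constructor
  · rintro ⟨N, A, hA, hd, rfl⟩
    exact ⟨_, ⟨N, A, hA, hd, rfl⟩, (rademacherNorm_smul c fun n => F (A n)).symm⟩
  · rintro ⟨_, ⟨N, A, hA, hd, rfl⟩, rfl⟩
    exact ⟨N, A, hA, hd, (rademacherNorm_smul c fun n => F (A n)).symm⟩

theorem randVar_smul (c : ℝ) (F : Set S → X) :
    randVar P r (c • F) = |c| * randVar P r F := by
  rw [randVar, randVarSet_smul, Real.sSup_smul_of_nonneg (abs_nonneg c), smul_eq_mul, randVar]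

theorem HasBoundedRandVariation.smul (hF : HasBoundedRandVariation P r F) (c : ℝ) :
    HasBoundedRandVariation P r (c • F) := by
  rw [HasBoundedRandVariation, randVarSet_smul]
  exact hF.smul_of_nonneg (abs_nonneg c)

variable [IsFiniteMeasure P] (hm : ∀ n, Measurable (r n)) (h1 : ∀ n, ∀ᵐ ω ∂P, |r n ω| = 1)
include hm h1

theorem add_randVar_mem_upperBounds (hF : HasBoundedRandVariation P r F)
    (hG : HasBoundedRandVariation P r G) :
    randVar P r F + randVar P r G ∈ upperBounds (randVarSet P r (F + G)) := by
  rintro _ ⟨N, A, hA, hd, rfl⟩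
  exact (rademacherNorm_add_le hm h1 (fun n => F (A n)) fun n => G (A n)).trans
    (add_le_add (rademacherNorm_le_randVar hF hA hd) (rademacherNorm_le_randVar hG hA hd))

theorem HasBoundedRandVariation.add (hF : HasBoundedRandVariation P r F)
    (hG : HasBoundedRandVariation P r G) : HasBoundedRandVariation P r (F + G) :=
  ⟨_, add_randVar_mem_upperBounds hm h1 hF hG⟩

theorem randVar_add_le (hF : HasBoundedRandVariation P r F)
    (hG : HasBoundedRandVariation P r G) :
    randVar P r (F + G) ≤ randVar P r F + randVar P r G :=
  randVar_le (add_randVar_mem_upperBounds hm h1 hF hG)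

theorem HasBoundedRandVariation.sub (hF : HasBoundedRandVariation P r F)
    (hG : HasBoundedRandVariation P r G) : HasBoundedRandVariation P r (F - G) := by
  rw [sub_eq_add_neg, ← neg_one_smul ℝ G]
  exact hF.add hm h1 (hG.smul (-1))

end RandVar

theorem MeasureTheory.VectorMeasure.exists_coe_eq_of_tendstoUniformly {S : Type*}
    [MeasurableSpace S] {M : Type*} [AddCommMonoid M] [UniformSpace M] [T2Space M]
    [ContinuousAdd M] {ι : Type*} {l : Filter ι} [l.NeBot] {F : ι → VectorMeasure S M}
    {g : Set S → M} (h : TendstoUniformly (fun i => ⇑(F i)) g l) :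
    ∃ G : VectorMeasure S M, ⇑G = g := by
  have hg (A : Set S) : Tendsto (fun i => F i A) l (𝓝 (g A)) := h.tendsto_at A
  have hzero {A : Set S} (hA : ∀ i, F i A = 0) : g A = 0 :=
    tendsto_nhds_unique (hg A) (by simp [hA])
  refine ⟨⟨g, hzero fun i => (F i).empty, fun A hA => hzero fun i => (F i).not_measurable hA,
    fun f hf hd => ?_⟩, rfl⟩
  have hunion (v : VectorMeasure S M) (s : Finset ℕ) : v (⋃ j ∈ s, f j) = ∑ j ∈ s, v (f j) :=
    VectorMeasure.of_biUnion_finset (hd.set_pairwise _) fun j _ => hf j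
  have hsum (s : Finset ℕ) : g (⋃ j ∈ s, f j) = ∑ j ∈ s, g (f j) :=
    tendsto_nhds_unique (hg _) <| by
      simpa only [hunion] using tendsto_finsetSum s fun j _ => hg (f j)
  -- Moore–Osgood: the partial unions converge uniformly in `i`, and each `F i` is σ-additive.
  have hlim := (h.comp fun s : Finset ℕ => ⋃ j ∈ s, f j).tendsto_of_eventually_tendsto
    (Eventually.of_forall fun i => by
      simpa only [HasSum, Function.comp_def, ← hunion] using (F i).m_iUnion hf hd)
    (hg (⋃ j, f j))
  simpa only [HasSum, Function.comp_def, hsum] using hlim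

section RandVarVectorMeasure

variable {S : Type*} [MeasurableSpace S] {Ω : Type*} [MeasurableSpace Ω] {P : Measure Ω}
  [IsProbabilityMeasure P] {r : ℕ → Ω → ℝ} {X : Type*} [NormedAddCommGroup X]
  [NormedSpace ℝ X]

theorem MeasureTheory.VectorMeasure.norm_apply_le_randVar (h1 : ∀ n, ∀ᵐ ω ∂P, |r n ω| = 1)
    {F : VectorMeasure S X} (hF : HasBoundedRandVariation P r ⇑F) (A : Set S) :
    ‖F A‖ ≤ randVar P r ⇑F := by
  by_cases hA : MeasurableSet A
  · exact le_csSup hF ⟨1, fun _ => A, fun _ => hA, Subsingleton.pairwise,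
      (rademacherNorm_const h1 (F A)).symm⟩
  · simpa [hA] using randVar_nonneg

theorem MeasureTheory.VectorMeasure.eq_zero_of_randVar_eq_zero
    (h1 : ∀ n, ∀ᵐ ω ∂P, |r n ω| = 1) {F : VectorMeasure S X}
    (hF : HasBoundedRandVariation P r ⇑F) (h0 : randVar P r ⇑F = 0) : F = 0 :=
  VectorMeasure.ext fun A _ => norm_le_zero_iff.1 (h0 ▸ F.norm_apply_le_randVar h1 hF A)

variable (hm : ∀ n, Measurable (r n)) (h1 : ∀ n, ∀ᵐ ω ∂P, |r n ω| = 1)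
include hm h1

theorem mem_upperBounds_randVarSet_of_tendsto {ι : Type*} {l : Filter ι} [l.NeBot]
    {H : ι → Set S → X} {K : Set S → X} {C : ℝ}
    (hK : ∀ A, MeasurableSet A → Tendsto (fun i => H i A) l (𝓝 (K A)))
    (hH : ∀ᶠ i in l, HasBoundedRandVariation P r (H i) ∧ randVar P r (H i) ≤ C) :
    C ∈ upperBounds (randVarSet P r K) := by
  rintro _ ⟨N, A, hA, hd, rfl⟩
  refine le_of_tendsto (((continuous_rademacherNorm hm h1).tendsto _).comp
    (tendsto_pi_nhds.2 fun n => hK (A n) (hA n))) ?_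
  filter_upwards [hH] with i ⟨hHi, hHC⟩
  exact (rademacherNorm_le_randVar hHi hA hd).trans hHC

theorem exists_tendsto_randVar_of_cauchy [CompleteSpace X] {F : ℕ → VectorMeasure S X}
    (hF : ∀ n, HasBoundedRandVariation P r ⇑(F n))
    (hcauchy : ∀ ε : ℝ, 0 < ε → ∃ N : ℕ, ∀ m ≥ N, ∀ n ≥ N, randVar P r ⇑(F m - F n) < ε) :
    ∃ G : VectorMeasure S X, HasBoundedRandVariation P r ⇑G ∧
      ∀ ε : ℝ, 0 < ε → ∃ N : ℕ, ∀ n ≥ N, randVar P r ⇑(F n - G) < ε := by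
  have hFsub (m n : ℕ) : HasBoundedRandVariation P r ⇑(F m - F n) := by
    rw [FunLike.coe_sub]
    exact (hF m).sub hm h1 (hF n)
  have hunif : UniformCauchySeqOn (fun n => ⇑(F n)) atTop Set.univ :=
    Metric.uniformCauchySeqOn_iff.2 fun ε hε => (hcauchy ε hε).imp fun N hN m hm n hn A _ => by
      simpa [dist_eq_norm] using
        ((F m - F n).norm_apply_le_randVar h1 (hFsub m n) A).trans_lt (hN m hm n hn)
  choose g hg using fun A => cauchySeq_tendsto_of_complete (hunif.cauchySeq (Set.mem_univ A))
  obtain ⟨G, rfl⟩ := VectorMeasure.exists_coe_eq_of_tendstoUniformly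
    (tendstoUniformlyOn_univ.1 (hunif.tendstoUniformlyOn_of_tendsto fun A _ => hg A))
  have hclose (ε : ℝ) (hε : 0 < ε) :
      ∃ N, ∀ n ≥ N, ε ∈ upperBounds (randVarSet P r ⇑(F n - G)) :=
    (hcauchy ε hε).imp fun N hN n hn =>
      mem_upperBounds_randVarSet_of_tendsto hm h1 (H := fun m => ⇑(F n - F m))
        (fun A _ => by simpa using tendsto_const_nhds.sub (hg A))
        ((eventually_ge_atTop N).mono fun m hm => ⟨hFsub n m, (hN n hn m hm).le⟩)
  refine ⟨G, ?_, fun ε hε => ?_⟩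
  · obtain ⟨N, hN⟩ := hclose 1 one_pos
    rw [← sub_sub_cancel (F N) G, FunLike.coe_sub]
    exact (hF N).sub hm h1 ⟨1, hN N le_rfl⟩
  · obtain ⟨N, hN⟩ := hclose (ε / 2) (half_pos hε)
    exact ⟨N, fun n hn => (randVar_le (hN n hn)).trans_lt (half_lt_self hε)⟩

end RandVarVectorMeasure

/-- The space `V^r(μ;X)` of countably additive vector measures of bounded
randomised variation is a vector space under setwise operations, the randomised variation is
a norm on it, and it is complete with respect to this norm, i.e. it is a Banach space. -/
theorem randomisedVariation_banachSpace
    {S : Type*} [MeasurableSpace S] {X : Type*} [NormedAddCommGroup X] [NormedSpace ℝ X]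
    [CompleteSpace X]
    {Ω : Type*} [MeasurableSpace Ω] (P : Measure Ω) [IsProbabilityMeasure P]
    (r : ℕ → Ω → ℝ) (hr : IsRademacherSeq P r) :
    -- `V^r(μ;X)` is closed under the vector space operations (setwise operations):
    ((0 : VectorMeasure S X) ∈ {F : VectorMeasure S X | HasBoundedRandVariation P r ⇑F}) ∧
    (∀ F G : VectorMeasure S X, HasBoundedRandVariation P r ⇑F →
      HasBoundedRandVariation P r ⇑G → HasBoundedRandVariation P r ⇑(F + G)) ∧
    (∀ (c : ℝ) (F : VectorMeasure S X), HasBoundedRandVariation P r ⇑F →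
      HasBoundedRandVariation P r ⇑(c • F)) ∧
    -- `‖·‖_{V^r(μ;X)}` is a norm on `V^r(μ;X)`:
    (randVar P r ⇑(0 : VectorMeasure S X) = 0) ∧
    (∀ F : VectorMeasure S X, HasBoundedRandVariation P r ⇑F →
      randVar P r ⇑F = 0 → F = 0) ∧
    (∀ F : VectorMeasure S X, HasBoundedRandVariation P r ⇑F → 0 ≤ randVar P r ⇑F) ∧
    (∀ (c : ℝ) (F : VectorMeasure S X), HasBoundedRandVariation P r ⇑F →
      randVar P r ⇑(c • F) = |c| * randVar P r ⇑F) ∧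
    (∀ F G : VectorMeasure S X, HasBoundedRandVariation P r ⇑F →
      HasBoundedRandVariation P r ⇑G →
      randVar P r ⇑(F + G) ≤ randVar P r ⇑F + randVar P r ⇑G) ∧
    -- completeness: every Cauchy sequence in the randomised variation norm converges:
    (∀ F : ℕ → VectorMeasure S X, (∀ n, HasBoundedRandVariation P r ⇑(F n)) →
      (∀ ε : ℝ, 0 < ε → ∃ N : ℕ, ∀ m ≥ N, ∀ n ≥ N, randVar P r ⇑(F m - F n) < ε) →
      ∃ G : VectorMeasure S X, HasBoundedRandVariation P r ⇑G ∧
        ∀ ε : ℝ, 0 < ε → ∃ N : ℕ, ∀ n ≥ N, randVar P r ⇑(F n - G) < ε) := by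
  have hm : ∀ n, Measurable (r n) := hr.1
  have h1 := hr.abs_eq_one_ae
  refine ⟨?_, fun F G hF hG => ?_, fun c F hF => ?_, ?_,
    fun F hF h0 => F.eq_zero_of_randVar_eq_zero h1 hF h0, fun F _ => randVar_nonneg,
    fun c F _ => ?_, fun F G hF hG => ?_, fun F hF hcauchy =>
    exists_tendsto_randVar_of_cauchy hm h1 hF hcauchy⟩
  · rw [Set.mem_ofPred_eq, FunLike.coe_zero]
    exact hasBoundedRandVariation_zero
  · rw [FunLike.coe_add]
    exact hF.add hm h1 hG
  · rw [FunLike.coe_smul]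
    exact hF.smul c
  · rw [FunLike.coe_zero]
    exact randVar_zero
  · rw [FunLike.coe_smul]
    exact randVar_smul c ⇑F
  · rw [FunLike.coe_add]
    exact randVar_add_le hm h1 hF hG
end

section
/- Let (S,Σ) be a measurable space, (Ω,ℱ,ℙ) a probability space, X a Banach space, and G: Σ → L²(Ω;X) a countably additive vector measure such that (a) for every A ∈ Σ the random variable G(A) is symmetric (G(A) and −G(A) have the same distribution), and (b) for every finite collection of disjoint sets A_1,…,A_N ∈ Σ the X-valued random variables G(A_1),…,G(A_N) are independent. Then G is of bounded randomised variation and ‖G‖_{V^r} = ‖G(S)‖_{L²(Ω;X)}; in particular, for all disjoint A_1,…,A_N ∈ Σ, 𝔼̃ ‖Σ_{n=1}^N r̃_n G(A_n)‖²_{L²(Ω;X)} = 𝔼 ‖Σ_{n=1}^N G(A_n)(·)‖²_X ≤ 𝔼 ‖G(S)(·)‖²_X, where (r̃_n) is a Rademacher sequence on an auxiliary probability space. -/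
open MeasureTheory ProbabilityTheory Function
open scoped ENNReal NNReal

/-! Flipping the signs of independent symmetric random variables does not change their joint
law, so `‖∑ εₙ G(Aₙ)‖_{L²} = ‖∑ G(Aₙ)‖_{L²}` for every choice of signs `εₙ = ±1`; averaging over
Rademacher signs gives the equality. With `U = ⋃ Aₙ` and signs `+1` on `U`, `-1` on `Uᶜ`, this
gives `‖G U + G Uᶜ‖ = ‖G U - G Uᶜ‖`, and then the triangle inequality applied to
`2 G U = (G U + G Uᶜ) + (G U - G Uᶜ)` yields `‖G U‖ ≤ ‖G S‖`: the randomised variation is bounded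
by `‖G S‖` and attained at the trivial partition `{S}`. -/

open Set TopologicalSpace

section SeparableReduction

variable {Ω X : Type*} [MeasurableSpace X]

lemma MeasurableSpace.comap_codRestrict (f : Ω → X) (K : Set X) (h : ∀ ω, f ω ∈ K) :
    MeasurableSpace.comap (K.codRestrict f h) inferInstance = MeasurableSpace.comap f ‹_› :=
  MeasurableSpace.comap_comp

variable [MeasurableSpace Ω] {P : Measure Ω}

lemma ProbabilityTheory.iIndepFun.codRestrict {ι : Type*} {f : ι → Ω → X} {K : Set X}
    (h : ∀ i ω, f i ω ∈ K) (hf : iIndepFun f P) :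
    iIndepFun (fun i => K.codRestrict (f i) (h i)) P := by
  rw [iIndepFun_iff_iIndep] at hf ⊢
  simpa only [MeasurableSpace.comap_codRestrict] using hf

lemma MeasureTheory.Measure.map_codRestrict_eq {f g : Ω → X} {K : Set X} (hf : Measurable f)
    (hg : Measurable g) (hfK : ∀ ω, f ω ∈ K) (hgK : ∀ ω, g ω ∈ K) (h : P.map f = P.map g) :
    P.map (K.codRestrict f hfK) = P.map (K.codRestrict g hgK) := by
  ext t ⟨t', ht', rfl⟩
  rw [Measure.map_apply (hf.codRestrict hfK) (measurable_subtype_coe ht'),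
    Measure.map_apply (hg.codRestrict hgK) (measurable_subtype_coe ht')]
  change P (f ⁻¹' t') = P (g ⁻¹' t')
  rw [← Measure.map_apply hf ht', ← Measure.map_apply hg ht', h]

end SeparableReduction

section IndependentSigns

variable {Ω : Type*} [MeasurableSpace Ω] {P : Measure Ω} {ι : Type*} [Fintype ι]

theorem integral_comp_eq_of_iIndepFun {X E : Type*} [PseudoMetricSpace X] [MeasurableSpace X]
    [BorelSpace X] [NormedAddCommGroup E] [NormedSpace ℝ E] {f g : ι → Ω → X}
    (hf : ∀ i, StronglyMeasurable (f i)) (hg : ∀ i, StronglyMeasurable (g i))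
    (hfi : iIndepFun f P) (hgi : iIndepFun g P) (hfg : ∀ i, P.map (f i) = P.map (g i))
    {Φ : (ι → X) → E} (hΦ : Continuous Φ) :
    ∫ ω, Φ (fun i => f i ω) ∂P = ∫ ω, Φ (fun i => g i ω) ∂P := by
  -- `Φ` need not be measurable for the product σ-algebra on `ι → X`, where the joint laws live;
  -- on the separable set `K` containing all ranges it is, as product and Borel σ-algebras agree.
  set K := ⋃ i, (range (f i) ∪ range (g i))
  have : SeparableSpace K :=
    (IsSeparable.iUnion fun i => (hf i).isSeparable_range.union (hg i).isSeparable_range)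
      |>.separableSpace
  have : SecondCountableTopology K := UniformSpace.secondCountable_of_separable K
  have hfK i ω : f i ω ∈ K := mem_iUnion.2 ⟨i, .inl ⟨ω, rfl⟩⟩
  have hgK i ω : g i ω ∈ K := mem_iUnion.2 ⟨i, .inr ⟨ω, rfl⟩⟩
  have hf' i : Measurable (K.codRestrict (f i) (hfK i)) := (hf i).measurable.codRestrict _
  have hg' i : Measurable (K.codRestrict (g i) (hgK i)) := (hg i).measurable.codRestrict _
  have hlaw : P.map (fun ω i => K.codRestrict (f i) (hfK i) ω)
      = P.map (fun ω i => K.codRestrict (g i) (hgK i) ω) := by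
    rw [(hfi.codRestrict hfK).map_fun_eq_pi_map fun i => (hf' i).aemeasurable,
      (hgi.codRestrict hgK).map_fun_eq_pi_map fun i => (hg' i).aemeasurable]
    exact congrArg Measure.pi <| funext fun i =>
      Measure.map_codRestrict_eq (hf i).measurable (hg i).measurable _ _ (hfg i)
  have hΦK : Continuous fun v : ι → K => Φ (fun i => v i) := by fun_prop
  calc ∫ ω, Φ (fun i => f i ω) ∂P
      = ∫ v, Φ (fun i => v i) ∂P.map (fun ω i => K.codRestrict (f i) (hfK i) ω) :=
        (integral_map (measurable_pi_lambda _ hf').aemeasurable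
          hΦK.aestronglyMeasurable).symm
    _ = ∫ v, Φ (fun i => v i) ∂P.map (fun ω i => K.codRestrict (g i) (hgK i) ω) := by
        rw [hlaw]
    _ = ∫ ω, Φ (fun i => g i ω) ∂P :=
        integral_map (measurable_pi_lambda _ hg').aemeasurable hΦK.aestronglyMeasurable

variable {X : Type*} [NormedAddCommGroup X] [NormedSpace ℝ X] [MeasurableSpace X] [BorelSpace X]

theorem integral_comp_sign_smul_eq {E : Type*} [NormedAddCommGroup E] [NormedSpace ℝ E]
    {f : ι → Ω → X} (hf : ∀ i, StronglyMeasurable (f i)) (hind : iIndepFun f P)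
    (hsym : ∀ i, P.map (f i) = P.map (fun ω => -f i ω))
    {ε : ι → ℝ} (hε : ∀ i, ε i = 1 ∨ ε i = -1) {Φ : (ι → X) → E} (hΦ : Continuous Φ) :
    ∫ ω, Φ (fun i => ε i • f i ω) ∂P = ∫ ω, Φ (fun i => f i ω) ∂P := by
  refine integral_comp_eq_of_iIndepFun (fun i => (hf i).const_smul (ε i)) hf
    (hind.comp _ fun i => (continuous_const_smul (ε i)).measurable) hind (fun i => ?_) hΦ
  rcases hε i with h | h
  · simp only [h, one_smul]
  · simp only [h, neg_one_smul]
    exact (hsym i).symm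

end IndependentSigns

lemma norm_le_norm_add_of_norm_add_eq_norm_sub {E : Type*} [SeminormedAddCommGroup E]
    [NormedSpace ℝ E] {a b : E} (h : ‖a + b‖ = ‖a - b‖) : ‖a‖ ≤ ‖a + b‖ := by
  have : ‖(2 : ℝ) • a‖ ≤ ‖a + b‖ + ‖a - b‖ := by
    rw [two_smul, show a + a = (a + b) + (a - b) by abel]
    exact norm_add_le _ _
  rw [norm_smul, ← h] at this
  norm_num at this
  linarith

section Lp

variable {Ω E : Type*} [MeasurableSpace Ω] {P : Measure Ω} [NormedAddCommGroup E]

lemma MeasureTheory.Lp.norm_sq_eq_integral_norm_sq (F : Lp E 2 P) :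
    ‖F‖ ^ 2 = ∫ ω, ‖F ω‖ ^ 2 ∂P := by
  rw [Lp.norm_def, toReal_eLpNorm (Lp.aestronglyMeasurable F),
    lpNorm_eq_integral_norm_rpow_toReal two_ne_zero ENNReal.ofNat_ne_top
      (Lp.aestronglyMeasurable F), ENNReal.toReal_ofNat, ← Real.rpow_natCast,
    ← Real.rpow_mul (integral_nonneg fun ω => by positivity)]
  norm_num

lemma MeasureTheory.Lp.norm_sum_sq_eq_integral {ι : Type*} (s : Finset ι) (F : ι → Lp E 2 P) :
    ‖∑ i ∈ s, F i‖ ^ 2 = ∫ ω, ‖∑ i ∈ s, F i ω‖ ^ 2 ∂P := by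
  rw [Lp.norm_sq_eq_integral_norm_sq]
  refine integral_congr_ae ?_
  filter_upwards [Lp.coeFn_fun_finsetSum s F] with ω h
  rw [h]

end Lp

section LpSigns

variable {Ω : Type*} [MeasurableSpace Ω] {P : Measure Ω} {ι : Type*} [Fintype ι]
  {X : Type*} [NormedAddCommGroup X] [NormedSpace ℝ X] [MeasurableSpace X] [BorelSpace X]
  {F : ι → Lp X 2 P}

theorem MeasureTheory.Lp.norm_sum_sign_smul_eq (hind : iIndepFun (fun i => ⇑(F i)) P)
    (hsym : ∀ i, P.map (F i) = P.map (fun ω => -F i ω))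
    {ε : ι → ℝ} (hε : ∀ i, ε i = 1 ∨ ε i = -1) :
    ‖∑ i, ε i • F i‖ = ‖∑ i, F i‖ := by
  refine (pow_left_inj₀ (norm_nonneg _) (norm_nonneg _) two_ne_zero).1 ?_
  have hsmul : ∀ᵐ ω ∂P, ∀ i, (ε i • F i) ω = ε i • F i ω :=
    ae_all_iff.2 fun i => Lp.coeFn_smul (ε i) (F i)
  calc ‖∑ i, ε i • F i‖ ^ 2 = ∫ ω, ‖∑ i, ε i • F i ω‖ ^ 2 ∂P := by
        rw [Lp.norm_sum_sq_eq_integral]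
        refine integral_congr_ae ?_
        filter_upwards [hsmul] with ω h
        simp only [h]
    _ = ∫ ω, ‖∑ i, F i ω‖ ^ 2 ∂P :=
        integral_comp_sign_smul_eq (fun i => Lp.stronglyMeasurable (F i)) hind hsym hε
          (Φ := fun v => ‖∑ i, v i‖ ^ 2) (by fun_prop)
    _ = ‖∑ i, F i‖ ^ 2 := (Lp.norm_sum_sq_eq_integral _ F).symm

theorem MeasureTheory.Lp.norm_sum_le_norm_sum_univ_of_iIndepFun (hind : iIndepFun (fun i => ⇑(F i)) P)
    (hsym : ∀ i, P.map (F i) = P.map (fun ω => -F i ω)) (s : Finset ι) :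
    ‖∑ i ∈ s, F i‖ ≤ ‖∑ i, F i‖ := by
  classical
  have hsplit := Finset.sum_add_sum_compl s F
  have hflip : ∑ i, (if i ∈ s then 1 else -1 : ℝ) • F i = ∑ i ∈ s, F i - ∑ i ∈ sᶜ, F i := by
    rw [← Finset.sum_add_sum_compl s, sub_eq_add_neg, ← Finset.sum_neg_distrib]
    congr 1 <;> refine Finset.sum_congr rfl fun i hi => ?_
    · simp [hi]
    · simp [Finset.mem_compl.1 hi]
  rw [← hsplit]
  refine norm_le_norm_add_of_norm_add_eq_norm_sub ?_
  rw [hsplit, ← hflip, Lp.norm_sum_sign_smul_eq hind hsym fun i => by split_ifs <;> simp]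

theorem MeasureTheory.Lp.integral_norm_sum_random_sign_smul_sq {Ω' : Type*} [MeasurableSpace Ω']
    {P' : Measure Ω'} [IsProbabilityMeasure P'] (hind : iIndepFun (fun i => ⇑(F i)) P)
    (hsym : ∀ i, P.map (F i) = P.map (fun ω => -F i ω)) {ε : ι → Ω' → ℝ}
    (hε : ∀ i, ∀ᵐ ω' ∂P', ε i ω' = 1 ∨ ε i ω' = -1) :
    ∫ ω', ‖∑ i, ε i ω' • F i‖ ^ 2 ∂P' = ‖∑ i, F i‖ ^ 2 := by
  have hconst : ∀ᵐ ω' ∂P', ‖∑ i, ε i ω' • F i‖ ^ 2 = ‖∑ i, F i‖ ^ 2 := by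
    filter_upwards [ae_all_iff.2 hε] with ω' h
    rw [Lp.norm_sum_sign_smul_eq hind hsym h]
  simp [integral_congr_ae hconst]

theorem MeasureTheory.VectorMeasure.norm_le_norm_univ_of_iIndepFun {S : Type*}
    [MeasurableSpace S] (G : VectorMeasure S (Lp X 2 P))
    (hsym : ∀ A, MeasurableSet A → P.map (G A) = P.map (fun ω => -G A ω))
    (hindep : ∀ A : Fin 2 → Set S, (∀ n, MeasurableSet (A n)) → Pairwise (Disjoint on A) →
      iIndepFun (fun n => ⇑(G (A n))) P)
    {U : Set S} (hU : MeasurableSet U) : ‖G U‖ ≤ ‖G univ‖ := by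
  have hA : ∀ i, MeasurableSet (![U, Uᶜ] i) := Fin.forall_fin_two.2 ⟨hU, hU.compl⟩
  have hd : Pairwise (Disjoint on ![U, Uᶜ]) := by
    simp [Pairwise, Fin.forall_fin_two, onFun, disjoint_compl_right, disjoint_compl_left]
  simpa [Fin.sum_univ_two, ← VectorMeasure.of_union disjoint_compl_right hU hU.compl] using
    Lp.norm_sum_le_norm_sum_univ_of_iIndepFun (hindep _ hA hd) (fun i => hsym _ (hA i)) {0}

end LpSigns

theorem IsRademacherSeq.ae_eq_one_or_eq_neg_one {Ω : Type*} [MeasurableSpace Ω] {P : Measure Ω}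
    {r : ℕ → Ω → ℝ} (hr : IsRademacherSeq P r) (n : ℕ) :
    ∀ᵐ ω ∂P, r n ω = 1 ∨ r n ω = -1 := by
  have hms : MeasurableSet ({1, -1} : Set ℝ)ᶜ := (measurableSet_singleton _).insert _ |>.compl
  change P (r n ⁻¹' ({1, -1} : Set ℝ)ᶜ) = 0
  rw [← Measure.map_apply (hr.1 n) hms, hr.2.2 n]
  simp

theorem randomisedVariation_of_independent_symmetric_general
    {S : Type*} [MeasurableSpace S]
    {X : Type*} [NormedAddCommGroup X] [NormedSpace ℝ X]
    [MeasurableSpace X] [BorelSpace X]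
    {Ω : Type*} [MeasurableSpace Ω] (P : Measure Ω)
    {Ω' : Type*} [MeasurableSpace Ω'] (P' : Measure Ω') [IsProbabilityMeasure P']
    (r : ℕ → Ω' → ℝ) (hr : IsRademacherSeq P' r)
    (G : VectorMeasure S (Lp X 2 P))
    -- (a) each `G(A)` is a symmetric random variable:
    (hsym : ∀ A : Set S, MeasurableSet A →
      Measure.map (fun ω => (G A : Ω → X) ω) P = Measure.map (fun ω => -(G A : Ω → X) ω) P)
    -- (b) the values of `G` on disjoint sets are independent:
    (hindep : ∀ (N : ℕ) (A : Fin N → Set S), (∀ n, MeasurableSet (A n)) →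
      Pairwise (Disjoint on A) →
      iIndepFun (fun n ω => (G (A n) : Ω → X) ω) P) :
    HasBoundedRandVariation P' r ⇑G ∧
    randVar P' r ⇑G = ‖G (Set.univ : Set S)‖ ∧
    ∀ (N : ℕ) (A : Fin N → Set S), (∀ n, MeasurableSet (A n)) →
      Pairwise (Disjoint on A) →
      (∫ ω', ‖∑ n : Fin N, r n ω' • G (A n)‖ ^ 2 ∂P')
          = (∫ ω, ‖∑ n : Fin N, (G (A n) : Ω → X) ω‖ ^ 2 ∂P) ∧
        (∫ ω, ‖∑ n : Fin N, (G (A n) : Ω → X) ω‖ ^ 2 ∂P)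
          ≤ ∫ ω, ‖(G (Set.univ : Set S) : Ω → X) ω‖ ^ 2 ∂P := by
  have hsum : ∀ (N : ℕ) (A : Fin N → Set S), (∀ n, MeasurableSet (A n)) →
      Pairwise (Disjoint on A) → ∑ n, G (A n) = G (⋃ n, A n) := fun N A hA hd => by
    rw [VectorMeasure.of_disjoint_iUnion hA hd, tsum_fintype]
  have hle : ∀ U, MeasurableSet U → ‖G U‖ ≤ ‖G Set.univ‖ := fun U hU =>
    G.norm_le_norm_univ_of_iIndepFun hsym (hindep 2) hU
  have hrad : ∀ (N : ℕ) (A : Fin N → Set S), (∀ n, MeasurableSet (A n)) →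
      Pairwise (Disjoint on A) →
      ∫ ω', ‖∑ n : Fin N, r n ω' • G (A n)‖ ^ 2 ∂P' = ‖∑ n, G (A n)‖ ^ 2 := fun N A hA hd =>
    Lp.integral_norm_sum_random_sign_smul_sq (hindep N A hA hd) (fun n => hsym _ (hA n))
      fun n => hr.ae_eq_one_or_eq_neg_one n
  have hgreat : IsGreatest (randVarSet P' r ⇑G) ‖G Set.univ‖ := by
    refine ⟨⟨1, fun _ => Set.univ, fun _ => .univ, Subsingleton.pairwise, ?_⟩, ?_⟩
    · rw [hrad 1 _ (fun _ => .univ) Subsingleton.pairwise]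
      simp
    · rintro _ ⟨N, A, hA, hd, rfl⟩
      rw [hrad N A hA hd, Real.sqrt_sq (norm_nonneg _), hsum N A hA hd]
      exact hle _ (.iUnion hA)
  refine ⟨hgreat.bddAbove, hgreat.csSup_eq, fun N A hA hd => ⟨?_, ?_⟩⟩
  · rw [hrad N A hA hd, Lp.norm_sum_sq_eq_integral]
  · rw [← Lp.norm_sum_sq_eq_integral, ← Lp.norm_sq_eq_integral_norm_sq, hsum N A hA hd]
    exact pow_le_pow_left₀ (norm_nonneg _) (hle _ (.iUnion hA)) 2

/-- Let `G : Σ → L²(Ω;X)` be a countably additive vector measure whose values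
are symmetric random variables such that the values on disjoint sets are independent. Then `G`
is of bounded randomised variation, `‖G‖_{V^r} = ‖G(S)‖_{L²(Ω;X)}`, and for all disjoint
measurable `A_1, …, A_N`,
`𝔼̃ ‖∑ r̃_n G(A_n)‖²_{L²(Ω;X)} = 𝔼 ‖∑ G(A_n)‖²_X ≤ 𝔼 ‖G(S)‖²_X`,
where `(r̃_n)` is a Rademacher sequence on an auxiliary probability space. -/
theorem randomisedVariation_of_independent_symmetric
    {S : Type*} [MeasurableSpace S]
    {X : Type*} [NormedAddCommGroup X] [NormedSpace ℝ X] [CompleteSpace X]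
    [MeasurableSpace X] [BorelSpace X]
    {Ω : Type*} [MeasurableSpace Ω] (P : Measure Ω) [IsProbabilityMeasure P]
    {Ω' : Type*} [MeasurableSpace Ω'] (P' : Measure Ω') [IsProbabilityMeasure P']
    (r : ℕ → Ω' → ℝ) (hr : IsRademacherSeq P' r)
    (G : VectorMeasure S (Lp X 2 P))
    -- (a) each `G(A)` is a symmetric random variable:
    (hsym : ∀ A : Set S, MeasurableSet A →
      Measure.map (fun ω => (G A : Ω → X) ω) P = Measure.map (fun ω => -(G A : Ω → X) ω) P)
    -- (b) the values of `G` on disjoint sets are independent: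
    (hindep : ∀ (N : ℕ) (A : Fin N → Set S), (∀ n, MeasurableSet (A n)) →
      Pairwise (Disjoint on A) →
      iIndepFun (fun n ω => (G (A n) : Ω → X) ω) P) :
    HasBoundedRandVariation P' r ⇑G ∧
    randVar P' r ⇑G = ‖G (Set.univ : Set S)‖ ∧
    ∀ (N : ℕ) (A : Fin N → Set S), (∀ n, MeasurableSet (A n)) →
      Pairwise (Disjoint on A) →
      (∫ ω', ‖∑ n : Fin N, r n ω' • G (A n)‖ ^ 2 ∂P')
          = (∫ ω, ‖∑ n : Fin N, (G (A n) : Ω → X) ω‖ ^ 2 ∂P) ∧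
        (∫ ω, ‖∑ n : Fin N, (G (A n) : Ω → X) ω‖ ^ 2 ∂P)
          ≤ ∫ ω, ‖(G (Set.univ : Set S) : Ω → X) ω‖ ^ 2 ∂P :=
  randomisedVariation_of_independent_symmetric_general P P' r hr G hsym hindep
end
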